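/- arXiv:2502.15330 — 6 statements merged into one kernel-verified Lean document; each statement's English description precedes it below -/
import Mathlib

section
/- Let V be a finite vertex set, let I be a set of edges on V, let D ⊆ I be a set of deleted edges, and set E = I \ D and G = (V, E). Let M_1, …, M_L ⊆ I be matchings such that for every j ∈ {1, …, L}, M_j is a maximal matching of the graph (V, I \ (M_1 ∪ … ∪ M_{j-1})). Fix ℓ ∈ {1, …, L} and a subset F ⊆ E, and let M ⊆ E be a matching of G such that: (i) every vertex matched by M_ℓ is either matched by M, or all edges of E incident to it belong to F; and (ii) no edge of F ∪ ((M_1 ∪ … ∪ M_{ℓ-1}) \ D) can be added to M while keeping M a matching. Then M is a maximal matching of G. -/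
/-!
Suppose an edge `e ∈ E` could be added to `M'`. The greedy hypothesis keeps `e` out of `F` and out
of the earlier levels `M_1, …, M_{ℓ-1}`, so `e` is an edge of the graph in which `M_ℓ` is maximal;
hence some endpoint `v` of `e` is matched by `M_ℓ`. By the covering hypothesis `v` is either matched
by `M'`, which blocks `e`, or all `E`-edges at `v` lie in `F`, which puts `e` in `F`.
-/

/-- A matching: a set of non-loop edges that pairwise share no endpoint. -/
def IsMatching {V : Type} (M : Finset (Sym2 V)) : Prop :=
  (∀ e ∈ M, ¬ e.IsDiag) ∧ ∀ e ∈ M, ∀ f ∈ M, e ≠ f → ∀ v : V, ¬ (v ∈ e ∧ v ∈ f)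

/-- A maximal matching of the graph with edge set `E`: a matching contained in `E`
such that no edge of `E` can be added to it while keeping it a matching. -/
def IsMaximalMatching {V : Type} [DecidableEq V] (E M : Finset (Sym2 V)) : Prop :=
  IsMatching M ∧ M ⊆ E ∧ ∀ e ∈ E, IsMatching (insert e M) → e ∈ M

section

variable {V : Type} [DecidableEq V]

theorem IsMatching.insert_iff {M : Finset (Sym2 V)} {e : Sym2 V} (hM : IsMatching M)
    (he : e ∉ M) :
    IsMatching (insert e M) ↔ ¬ e.IsDiag ∧ ∀ v ∈ e, ∀ f ∈ M, v ∉ f := by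
  constructor
  · rintro ⟨hdiag, hdisj⟩
    refine ⟨hdiag e (Finset.mem_insert_self e M), fun v hve f hf hvf => ?_⟩
    have hef : e ≠ f := fun h => he (h ▸ hf)
    exact hdisj e (Finset.mem_insert_self e M) f (Finset.mem_insert_of_mem hf) hef v ⟨hve, hvf⟩
  · rintro ⟨hediag, hfree⟩
    refine ⟨?_, ?_⟩
    · intro f hf
      rcases Finset.mem_insert.mp hf with rfl | hf
      exacts [hediag, hM.1 f hf]
    · intro f hf g hg hfg v ⟨hvf, hvg⟩
      rcases Finset.mem_insert.mp hf with rfl | hfM <;>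
        rcases Finset.mem_insert.mp hg with rfl | hgM
      exacts [hfg rfl, hfree v hvf g hgM hvg, hfree v hvg f hfM hvf,
        hM.2 f hfM g hgM hfg v ⟨hvf, hvg⟩]

theorem IsMaximalMatching.exists_mem_of_mem {E M : Finset (Sym2 V)} {e : Sym2 V}
    (h : IsMaximalMatching E M) (he : e ∈ E) (hediag : ¬ e.IsDiag) :
    ∃ v ∈ e, ∃ f ∈ M, v ∈ f := by
  by_contra! hfree
  by_cases heM : e ∈ M
  · exact hfree e.out.1 (Sym2.out_fst_mem e) e heM (Sym2.out_fst_mem e)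
  · exact heM (h.2.2 e he ((h.1.insert_iff heM).mpr ⟨hediag, hfree⟩))

end

theorem stmt0_general {V : Type} [DecidableEq V]
    (I D : Finset (Sym2 V))
    (L : ℕ) (M : Fin L → Finset (Sym2 V))
    (hHier : ∀ j : Fin L, IsMaximalMatching (I \ (Finset.Iio j).biUnion M) (M j))
    (ℓ : Fin L) (F : Finset (Sym2 V))
    (M' : Finset (Sym2 V)) (hM'sub : M' ⊆ I \ D) (hM' : IsMatching M')
    (hcover : ∀ v : V, (∃ e ∈ M ℓ, v ∈ e) →
      (∃ e ∈ M', v ∈ e) ∨ (∀ e ∈ I \ D, v ∈ e → e ∈ F))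
    (hgreedy : ∀ e ∈ F ∪ ((Finset.Iio ℓ).biUnion M \ D),
      IsMatching (insert e M') → e ∈ M') :
    IsMaximalMatching (I \ D) M' := by
  refine ⟨hM', hM'sub, fun e heE hins => ?_⟩
  by_contra heM'
  obtain ⟨heI, heD⟩ := Finset.mem_sdiff.mp heE
  have heF : e ∉ F := fun h => heM' (hgreedy e (Finset.mem_union_left _ h) hins)
  have heLower : e ∉ (Finset.Iio ℓ).biUnion M := fun h =>
    heM' (hgreedy e (Finset.mem_union_right _ (Finset.mem_sdiff.mpr ⟨h, heD⟩)) hins)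
  obtain ⟨hediag, hfree⟩ := (hM'.insert_iff heM').mp hins
  obtain ⟨v, hve, f, hf, hvf⟩ :=
    (hHier ℓ).exists_mem_of_mem (Finset.mem_sdiff.mpr ⟨heI, heLower⟩) hediag
  rcases hcover v ⟨f, hf, hvf⟩ with ⟨g, hg, hvg⟩ | hallF
  · exact hfree v hve g hg hvg
  · exact heF (hallF e heE hve)

/-- Paper's Lemma 3.1 (key repair lemma), static simple-edge-set form.
`I` is the set of inserted edges, `D ⊆ I` the deleted ones, `E = I \ D`, and
`M 0, …, M (L-1)` is a hierarchical maximal matching structure on `I`.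
If every vertex matched by `M ℓ` is either matched by `M'` or has all of its
incident `E`-edges in `F`, and no edge of `F ∪ ((M 0 ∪ … ∪ M (ℓ-1)) \ D)` can be
added to `M'`, then `M'` is a maximal matching of `(V, E)`. -/
theorem stmt0 {V : Type} [Fintype V] [DecidableEq V]
    (I D : Finset (Sym2 V)) (hIloop : ∀ e ∈ I, ¬ e.IsDiag) (hDI : D ⊆ I)
    (L : ℕ) (M : Fin L → Finset (Sym2 V))
    (hMI : ∀ j, M j ⊆ I)
    (hHier : ∀ j : Fin L, IsMaximalMatching (I \ (Finset.Iio j).biUnion M) (M j))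
    (ℓ : Fin L) (F : Finset (Sym2 V)) (hF : F ⊆ I \ D)
    (M' : Finset (Sym2 V)) (hM'sub : M' ⊆ I \ D) (hM' : IsMatching M')
    (hcover : ∀ v : V, (∃ e ∈ M ℓ, v ∈ e) →
      (∃ e ∈ M', v ∈ e) ∨ (∀ e ∈ I \ D, v ∈ e → e ∈ F))
    (hgreedy : ∀ e ∈ F ∪ ((Finset.Iio ℓ).biUnion M \ D),
      IsMatching (insert e M') → e ∈ M') :
    IsMaximalMatching (I \ D) M' :=
  stmt0_general I D L M hHier ℓ F M' hM'sub hM' hcover hgreedy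
end

section
/- Let a, b, n be natural numbers with a < n and b ≤ n − a. Then C(n − a, b) / C(n, b) ≤ (1 − b/n)^a, where C(·,·) denotes the binomial coefficient and the quotient and power are taken over the reals. -/
/-!
Since `C(m - 1, b) = (1 - b/m) C(m, b)`, descending from `C(n, b)` to `C(n - a, b)` multiplies by
the `a` factors `1 - b/m` for `n - a < m ≤ n`, each of which lies in `[0, 1 - b/n]`.
-/

theorem Nat.cast_choose_eq_one_sub_div_mul_choose_succ {K : Type*} [Field K] [CharZero K]
    {m b : ℕ} (hb : b ≤ m + 1) :
    (m.choose b : K) = (1 - b / (m + 1)) * (m + 1).choose b := by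
  have h := congrArg (Nat.cast : ℕ → K) (Nat.choose_mul_succ_eq m b)
  push_cast [Nat.cast_sub hb] at h
  field_simp
  linear_combination h

theorem Nat.cast_choose_le_one_sub_div_pow_mul_choose {K : Type*} [Field K] [LinearOrder K]
    [IsStrictOrderedRing K] {b m n : ℕ} (hb : b ≤ m) (hmn : m ≤ n) :
    (m.choose b : K) ≤ (1 - b / n) ^ (n - m) * n.choose b := by
  refine Nat.decreasingInduction'
    (P := fun k => (k.choose b : K) ≤ (1 - b / n) ^ (n - k) * n.choose b)
    (fun k hkn hmk ih => ?_) hmn (by simp)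
  have hbk : b ≤ k := hb.trans hmk
  have hfactor_nonneg : 0 ≤ 1 - (b : K) / (k + 1) := by
    rw [sub_nonneg, div_le_one (by positivity)]
    exact_mod_cast hbk.trans k.le_succ
  have hfactor_le : 1 - (b : K) / (k + 1) ≤ 1 - b / n := by
    gcongr
    exact_mod_cast hkn
  calc (k.choose b : K) = (1 - b / (k + 1)) * (k + 1).choose b :=
        Nat.cast_choose_eq_one_sub_div_mul_choose_succ (by omega)
    _ ≤ (1 - b / n) * ((1 - b / n) ^ (n - (k + 1)) * n.choose b) :=
        mul_le_mul hfactor_le ih (by positivity) (hfactor_nonneg.trans hfactor_le)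
    _ = (1 - b / n) ^ (n - k) * n.choose b := by
        rw [← mul_assoc, ← _root_.pow_succ', show n - (k + 1) + 1 = n - k by omega]

/-- Paper's Lemma A.1: for naturals `a < n` and `b ≤ n - a`,
`C(n-a, b) / C(n, b) ≤ (1 - b/n)^a` over the reals. -/
theorem stmt2 (a b n : ℕ) (ha : a < n) (hb : b ≤ n - a) :
    ((n - a).choose b : ℝ) / (n.choose b : ℝ) ≤ (1 - (b : ℝ) / (n : ℝ)) ^ a := by
  have hchoose_pos : (0 : ℝ) < n.choose b := by
    exact_mod_cast Nat.choose_pos (hb.trans (n.sub_le a))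
  rw [div_le_iff₀ hchoose_pos]
  have h := Nat.cast_choose_le_one_sub_div_pow_mul_choose (K := ℝ) hb (n.sub_le a)
  rwa [Nat.sub_sub_self ha.le] at h
end

section
/- (Information-theoretic form of the Embedded-Augmented-Index lower bound, Theorem 4.1.) Let s, t ≥ 1 be integers and ε ∈ (0, 1/2). Let X = (X_i[j])_{i ∈ [s], j ∈ [t]} be s·t independent uniform bits; let R be a random variable with finite range, independent of X; let (I, J) be uniformly distributed on [s] × [t] and independent of (X, R); let M = f(X, R) for some function f with finite range; and let X̃ = g(I, J, (X_I[j])_{J < j ≤ t}, R, M) ∈ {0,1} for some function g. If Pr[X̃ = X_I[J]] ≥ 1/2 + ε, then H(M) ≥ (1 − H₂(1/2 − ε)) · s · t, where entropy is measured in bits (logarithm base 2). -/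
/-!
Since `X` is independent of `R`, `H(M) ≥ H(R, M) - H(R) ≥ H(X) - H(X | R, M)`, and `H(X) = st` bits.
Revealing the bits of `X` column by column from the right, the chain rule bounds `H(X | R, M)` by
the sum over `(i, j)` of `H(X_i[j] | X_i[j+1..t], R, M)`, and Fano's inequality bounds each term
by `H₂` of the probability that Bob errs at `(i, j)`. As `(I, J)` is uniform and independent of
`(X, R)`, these error probabilities average to at most `1/2 - ε`, so concavity of `H₂` and its
monotonicity on `[0, 1/2]` give `H(X | R, M) ≤ st · H₂(1/2 - ε)`.
-/

/-- Probability of the event `E` under the probability mass function `p`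
on the finite sample space `Ω`. -/
noncomputable def prP {Ω : Type} [Fintype Ω] (p : Ω → ℝ) (E : Set Ω) : ℝ :=
  ∑ ω : Ω, E.indicator p ω

/-- Shannon entropy in bits (base 2) of the random variable `X` on the finite
probability space `(Ω, p)`. -/
noncomputable def ent2 {Ω β : Type} [Fintype Ω] [Fintype β] (p : Ω → ℝ) (X : Ω → β) : ℝ :=
  ∑ b : β, -(prP p {ω | X ω = b}) * Real.logb 2 (prP p {ω | X ω = b})

/-- The binary entropy function (base 2). -/
noncomputable def binEnt2 (q : ℝ) : ℝ :=
  -q * Real.logb 2 q - (1 - q) * Real.logb 2 (1 - q)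

open Real Finset

namespace EmbeddedAugmentedIndex

variable {Ω : Type} [Fintype Ω] (p : Ω → ℝ)

lemma prP_nonneg (hp0 : ∀ ω, 0 ≤ p ω) (E : Set Ω) : 0 ≤ prP p E :=
  sum_nonneg fun ω _ => Set.indicator_nonneg (fun ω _ => hp0 ω) ω

lemma prP_mono (hp0 : ∀ ω, 0 ≤ p ω) {E F : Set Ω} (h : E ⊆ F) : prP p E ≤ prP p F :=
  sum_le_sum fun ω _ => Set.indicator_le_indicator_of_subset h hp0 ω

lemma prP_univ (hp1 : ∑ ω, p ω = 1) : prP p Set.univ = 1 := by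
  simpa [prP] using hp1

lemma prP_le_one (hp0 : ∀ ω, 0 ≤ p ω) (hp1 : ∑ ω, p ω = 1) (E : Set Ω) : prP p E ≤ 1 :=
  prP_univ p hp1 ▸ prP_mono p hp0 (Set.subset_univ E)

lemma prP_compl (hp1 : ∑ ω, p ω = 1) (E : Set Ω) : prP p Eᶜ = 1 - prP p E := by
  simp [prP, Set.indicator_compl, hp1]

open scoped Classical in
lemma prP_setOf (Q : Ω → Prop) : prP p {ω | Q ω} = ∑ ω, if Q ω then p ω else 0 := by
  simp only [prP, Set.indicator_apply, Set.mem_ofPred_eq]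

lemma sum_prP_mul {β : Type} [Fintype β] (A : Ω → β) (h : β → ℝ) :
    ∑ b, prP p {ω | A ω = b} * h b = ∑ ω, p ω * h (A ω) := by
  classical
  simp only [prP_setOf, sum_mul, ite_mul, zero_mul]
  rw [sum_comm]
  simp

lemma sum_prP_mul_comp {β γ : Type} [Fintype β] [Fintype γ] (A : Ω → β) (ψ : β → γ)
    (h : γ → ℝ) :
    ∑ b, prP p {ω | A ω = b} * h (ψ b) = ∑ c, prP p {ω | ψ (A ω) = c} * h c := by
  rw [sum_prP_mul p A fun b => h (ψ b), sum_prP_mul p (fun ω => ψ (A ω)) h]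

lemma sum_prP_eq_one (hp1 : ∑ ω, p ω = 1) {β : Type} [Fintype β] (A : Ω → β) :
    ∑ b, prP p {ω | A ω = b} = 1 := by
  simpa [hp1] using sum_prP_mul p A fun _ => 1

lemma sum_prP_pair_eq_prP {β γ : Type} [Fintype β] (A : Ω → β) (C : Ω → γ) (c : γ) :
    ∑ b, prP p {ω | (A ω, C ω) = (b, c)} = prP p {ω | C ω = c} := by
  classical
  simp only [prP_setOf, Prod.mk.injEq]
  rw [sum_comm]
  refine sum_congr rfl fun ω _ => ?_
  by_cases hc : C ω = c <;> simp [hc]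

lemma sum_mul_log_le_sum_mul_log {ι : Type} (u : Finset ι) (a b : ι → ℝ)
    (ha : ∀ i ∈ u, 0 ≤ a i) (hb : ∀ i ∈ u, 0 ≤ b i) (hab_pos : ∀ i ∈ u, 0 < a i → 0 < b i)
    (hab : ∑ i ∈ u, b i ≤ ∑ i ∈ u, a i) :
    ∑ i ∈ u, a i * log (b i) ≤ ∑ i ∈ u, a i * log (a i) := by
  -- termwise `a log (b / a) ≤ b - a`, from `log x ≤ x - 1`
  have key : ∀ i ∈ u, a i * log (b i) - a i * log (a i) ≤ b i - a i := by
    intro i hi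
    rcases (ha i hi).eq_or_lt with h0 | hpos
    · simpa [← h0] using hb i hi
    · have hbpos := hab_pos i hi hpos
      have hlog := log_le_sub_one_of_pos (div_pos hbpos hpos)
      rw [log_div hbpos.ne' hpos.ne', div_sub_one hpos.ne', le_div_iff₀ hpos] at hlog
      linarith
  have := sum_le_sum key
  rw [sum_sub_distrib, sum_sub_distrib] at this
  linarith

noncomputable def entropy {β : Type} [Fintype β] (A : Ω → β) : ℝ :=
  ∑ b, negMulLog (prP p {ω | A ω = b})

noncomputable def condEntropy {β γ : Type} [Fintype β] [Fintype γ] (A : Ω → β) (C : Ω → γ) : ℝ :=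
  entropy p (fun ω => (A ω, C ω)) - entropy p C

lemma entropy_eq_neg_sum_mul_log {β : Type} [Fintype β] (A : Ω → β) :
    entropy p A = -∑ b, prP p {ω | A ω = b} * log (prP p {ω | A ω = b}) := by
  simp [entropy, negMulLog, sum_neg_distrib]

lemma entropy_comp_of_injective {β γ : Type} [Fintype β] [Fintype γ] (A : Ω → β) {σ : β → γ}
    (hσ : Function.Injective σ) : entropy p (fun ω => σ (A ω)) = entropy p A := by
  refine (Fintype.sum_of_injective σ hσ _ _ (fun c hc => ?_) fun b => ?_).symm
  · have : {ω | σ (A ω) = c} = ∅ := Set.eq_empty_of_forall_notMem fun ω h => hc ⟨A ω, h⟩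
    simp [this, prP]
  · simp [hσ.eq_iff]

lemma entropy_const (hp1 : ∑ ω, p ω = 1) {β : Type} [Fintype β] (b : β) :
    entropy p (fun _ => b) = 0 := by
  rw [entropy_comp_of_injective p (fun _ => ())
    (fun _ _ _ => rfl : Function.Injective fun _ : Unit => b)]
  simp [entropy, prP_univ p hp1]

lemma entropy_pair_of_comp {β γ : Type} [Fintype β] [Fintype γ] {A : Ω → β} {B : Ω → γ}
    {φ : β → γ} (h : ∀ ω, B ω = φ (A ω)) : entropy p (fun ω => (A ω, B ω)) = entropy p A := by
  simp_rw [h]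
  exact entropy_comp_of_injective p A (σ := fun a => (a, φ a)) fun a a' h => congrArg Prod.fst h

lemma entropy_congr {β γ : Type} [Fintype β] [Fintype γ] {A : Ω → β} {B : Ω → γ}
    {φ : β → γ} {ψ : γ → β} (hB : ∀ ω, B ω = φ (A ω)) (hA : ∀ ω, A ω = ψ (B ω)) :
    entropy p A = entropy p B := by
  rw [← entropy_pair_of_comp p hB, ← entropy_pair_of_comp p hA,
    ← entropy_comp_of_injective p (fun ω => (A ω, B ω)) Prod.swap_injective]
  rfl

lemma condEntropy_le_condEntropy_comp (hp0 : ∀ ω, 0 ≤ p ω) (hp1 : ∑ ω, p ω = 1)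
    {α β γ : Type} [Fintype α] [Fintype β] [Fintype γ] (A : Ω → α) (C : Ω → β) (φ : β → γ) :
    condEntropy p A C ≤ condEntropy p A (fun ω => φ (C ω)) := by
  set Pac : α × β → ℝ := fun x => prP p {ω | (A ω, C ω) = x}
  set Pc : β → ℝ := fun c => prP p {ω | C ω = c}
  set Pad : α × γ → ℝ := fun y => prP p {ω | (A ω, φ (C ω)) = y}
  set Pd : γ → ℝ := fun d => prP p {ω | φ (C ω) = d}
  have hpos : ∀ x, 0 < Pac x → 0 < Pc x.2 ∧ 0 < Pad (x.1, φ x.2) ∧ 0 < Pd (φ x.2) := by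
    intro x hx
    refine ⟨hx.trans_le (prP_mono p hp0 ?_), hx.trans_le (prP_mono p hp0 ?_),
      hx.trans_le (prP_mono p hp0 ?_)⟩ <;>
    · intro ω (hω : _ = x)
      simp [← hω]
  -- Gibbs' inequality against `b(a, c) = P(c) P(a, φ c) / P(φ c)`
  set b : α × β → ℝ := fun x => Pc x.2 * Pad (x.1, φ x.2) / Pd (φ x.2)
  have hb_sum : ∑ x, b x ≤ ∑ x, Pac x := by
    have hrow : ∀ c, ∑ a, b (a, c) = Pc c * (Pd (φ c) / Pd (φ c)) := fun c => by
      simp only [b, ← sum_div, ← mul_sum, mul_div_assoc]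
      rw [sum_prP_pair_eq_prP p A (fun ω => φ (C ω)) (φ c)]
    calc ∑ x, b x = ∑ c, Pc c * (Pd (φ c) / Pd (φ c)) := by
          rw [Fintype.sum_prod_type_right]; exact sum_congr rfl fun c _ => hrow c
      _ ≤ ∑ c, Pc c := sum_le_sum fun c _ =>
          mul_le_of_le_one_right (prP_nonneg p hp0 _) (div_self_le_one _)
      _ = ∑ x, Pac x := by rw [sum_prP_eq_one p hp1, sum_prP_eq_one p hp1]
  have hgibbs := sum_mul_log_le_sum_mul_log univ Pac b (fun x _ => prP_nonneg p hp0 _)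
    (fun x _ => div_nonneg (mul_nonneg (prP_nonneg p hp0 _) (prP_nonneg p hp0 _))
      (prP_nonneg p hp0 _))
    (fun x _ hx => by obtain ⟨h1, h2, h3⟩ := hpos x hx; positivity) hb_sum
  have hsplit : ∀ x, Pac x * log (b x) =
      Pac x * log (Pc x.2) + Pac x * log (Pad (x.1, φ x.2)) - Pac x * log (Pd (φ x.2)) := by
    intro x
    rcases (prP_nonneg p hp0 _ : 0 ≤ Pac x).eq_or_lt with h0 | hx
    · change 0 = Pac x at h0
      rw [← h0]; ring
    · obtain ⟨h1, h2, h3⟩ := hpos x hx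
      rw [log_div (by positivity) h3.ne', log_mul h1.ne' h2.ne']
      ring
  have hC : ∑ x, Pac x * log (Pc x.2) = ∑ c, Pc c * log (Pc c) :=
    sum_prP_mul_comp p (fun ω => (A ω, C ω)) Prod.snd fun c => log (Pc c)
  have hAD : ∑ x, Pac x * log (Pad (x.1, φ x.2)) = ∑ y, Pad y * log (Pad y) :=
    sum_prP_mul_comp p (fun ω => (A ω, C ω)) (fun x => (x.1, φ x.2)) fun y => log (Pad y)
  have hD : ∑ x, Pac x * log (Pd (φ x.2)) = ∑ d, Pd d * log (Pd d) :=
    sum_prP_mul_comp p (fun ω => (A ω, C ω)) (fun x => φ x.2) fun d => log (Pd d)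
  simp only [sum_congr rfl fun x _ => hsplit x, sum_sub_distrib, sum_add_distrib] at hgibbs
  simp only [condEntropy, entropy_eq_neg_sum_mul_log]
  linarith

lemma condEntropy_le_entropy (hp0 : ∀ ω, 0 ≤ p ω) (hp1 : ∑ ω, p ω = 1)
    {β γ : Type} [Fintype β] [Fintype γ] (A : Ω → β) (C : Ω → γ) :
    condEntropy p A C ≤ entropy p A := by
  have h := condEntropy_le_condEntropy_comp p hp0 hp1 A C fun _ => ()
  unfold condEntropy at h
  rwa [entropy_pair_of_comp p (φ := fun _ => ()) fun _ => rfl,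
    entropy_const p hp1, sub_zero] at h

lemma entropy_pair_le_add (hp0 : ∀ ω, 0 ≤ p ω) (hp1 : ∑ ω, p ω = 1)
    {β γ : Type} [Fintype β] [Fintype γ] (A : Ω → β) (B : Ω → γ) :
    entropy p (fun ω => (A ω, B ω)) ≤ entropy p A + entropy p B := by
  have := condEntropy_le_entropy p hp0 hp1 A B
  rw [condEntropy] at this
  linarith

lemma entropy_pair_of_indep (hp1 : ∑ ω, p ω = 1) {β γ : Type} [Fintype β] [Fintype γ]
    (A : Ω → β) (B : Ω → γ) (h : ∀ a b, prP p {ω | A ω = a ∧ B ω = b} =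
      prP p {ω | A ω = a} * prP p {ω | B ω = b}) :
    entropy p (fun ω => (A ω, B ω)) = entropy p A + entropy p B := by
  simp only [entropy, Fintype.sum_prod_type, Prod.mk.injEq, h, negMulLog_mul, sum_add_distrib,
    ← sum_mul, ← mul_sum, sum_prP_eq_one p hp1, one_mul]

lemma entropy_bool (hp1 : ∑ ω, p ω = 1) (E : Ω → Bool) :
    entropy p E = binEntropy (prP p {ω | E ω = true}) := by
  have h := sum_prP_eq_one p hp1 E
  rw [Fintype.sum_bool] at h
  rw [entropy, Fintype.sum_bool, binEntropy_eq_negMulLog_add_negMulLog_one_sub, ← h,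
    add_sub_cancel_left]

lemma condEntropy_le_binEntropy (hp0 : ∀ ω, 0 ≤ p ω) (hp1 : ∑ ω, p ω = 1)
    {γ : Type} [Fintype γ] (A : Ω → Bool) (C : Ω → γ) (G : γ → Bool) :
    condEntropy p A C ≤ binEntropy (prP p {ω | G (C ω) ≠ A ω}) := by
  -- `A` and the error indicator `E = A xor G(C)` determine each other given `C`
  set E : Ω → Bool := fun ω => xor (A ω) (G (C ω))
  have hAE : condEntropy p A C = condEntropy p E C := by
    rw [condEntropy, condEntropy, entropy_congr p (φ := fun x => (xor x.1 (G x.2), x.2))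
      (ψ := fun x => (xor x.1 (G x.2), x.2)) (fun _ => rfl)]
    intro ω
    simp
  have hE : {ω | E ω = true} = {ω | G (C ω) ≠ A ω} := by
    ext ω
    simp [E, ne_comm]
  rw [hAE, ← hE, ← entropy_bool p hp1]
  exact condEntropy_le_entropy p hp0 hp1 E C

lemma condEntropy_piecewise_le_sum (hp0 : ∀ ω, 0 ≤ p ω) (hp1 : ∑ ω, p ω = 1)
    {κ ι α γ : Type} [Fintype κ] [DecidableEq κ] [LinearOrder ι] [Fintype α] [Inhabited α]
    [Fintype γ] (r : κ → ι) (X : Ω → κ → α) (W : Ω → γ) (S : Finset κ) :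
    condEntropy p (fun ω => S.piecewise (X ω) fun _ => default) W ≤
      ∑ k ∈ S, condEntropy p (fun ω => X ω k)
        (fun ω => ((S.filter fun k' => r k < r k').piecewise (X ω) (fun _ => default), W ω)) := by
  set d : κ → α := fun _ => default
  induction S using Finset.induction_on_min_value r with
  | empty =>
    simp only [piecewise_empty, sum_empty, condEntropy]
    rw [entropy_comp_of_injective p W (σ := fun w => (d, w)) fun _ _ h => congrArg Prod.snd h,
      sub_self]
  | insert a S ha hmin ih =>
    have hfilter : ∀ k, r a ≤ r k →
        ((insert a S).filter fun k' => r k < r k') = S.filter fun k' => r k < r k' := fun k hk => by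
      rw [filter_insert, if_neg hk.not_gt]
    have hchain : condEntropy p (fun ω => (insert a S).piecewise (X ω) d) W =
        condEntropy p (fun ω => X ω a) (fun ω => (S.piecewise (X ω) d, W ω)) +
          condEntropy p (fun ω => S.piecewise (X ω) d) W := by
      have := entropy_congr p (A := fun ω => ((insert a S).piecewise (X ω) d, W ω))
        (B := fun ω => (X ω a, (S.piecewise (X ω) d, W ω)))
        (φ := fun x => (x.1 a, (S.piecewise x.1 d, x.2)))
        (ψ := fun y => (Function.update y.2.1 a y.1, y.2.2))
        (fun ω => by simp [piecewise_piecewise_of_subset_left (subset_insert a S)])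
        (fun ω => by simp [piecewise_insert])
      simp only [condEntropy, this]
      ring
    have hstep := condEntropy_le_condEntropy_comp p hp0 hp1 (fun ω => X ω a)
      (fun ω => (S.piecewise (X ω) d, W ω))
      (fun y => ((S.filter fun k' => r a < r k').piecewise y.1 d, y.2))
    simp only [piecewise_piecewise_of_subset_left (filter_subset _ S)] at hstep
    rw [sum_insert ha, hfilter a le_rfl, sum_congr rfl fun k hk => by rw [hfilter k (hmin k hk)],
      hchain]
    exact add_le_add hstep ih

def rowSuffix {κ₁ κ₂ : Type} [LinearOrder κ₂] (x : κ₁ → κ₂ → Bool) (i : κ₁) (j : κ₂) :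
    κ₂ → Bool :=
  fun j' => if j < j' then x i j' else false

lemma condEntropy_le_sum_binEntropy (hp0 : ∀ ω, 0 ≤ p ω) (hp1 : ∑ ω, p ω = 1)
    {κ₁ κ₂ γ : Type} [Fintype κ₁] [DecidableEq κ₁] [Fintype κ₂] [LinearOrder κ₂] [Fintype γ]
    (X : Ω → κ₁ → κ₂ → Bool) (W : Ω → γ) (G : κ₁ → κ₂ → (κ₂ → Bool) → γ → Bool) :
    condEntropy p X W ≤ ∑ c : κ₁ × κ₂,
      binEntropy (prP p {ω | G c.1 c.2 (rowSuffix (X ω) c.1 c.2) (W ω) ≠ X ω c.1 c.2}) := by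
  set X' : Ω → κ₁ × κ₂ → Bool := fun ω => Function.uncurry (X ω)
  have huncurry : condEntropy p X W = condEntropy p X' W := by
    rw [condEntropy, condEntropy, ← entropy_comp_of_injective p (fun ω => (X ω, W ω))
      (σ := fun y => (Function.uncurry y.1, y.2))]
    intro y y' h
    simp only [Prod.mk.injEq] at h
    exact Prod.ext (Function.uncurry_injective h.1) h.2
  have hchain := condEntropy_piecewise_le_sum p hp0 hp1 Prod.snd X' W univ
  simp only [piecewise_univ] at hchain
  refine huncurry ▸ hchain.trans (sum_le_sum fun c _ => ?_)
  -- the chain rule conditions on all bits in later columns, among them the rest of row `c.1`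
  have hsuffix := condEntropy_le_condEntropy_comp p hp0 hp1 (fun ω => X' ω c)
    (fun ω => ((univ.filter fun c' : κ₁ × κ₂ => c.2 < c'.2).piecewise (X' ω) (fun _ => default),
      W ω))
    (fun y => (fun j' => if c.2 < j' then y.1 (c.1, j') else false, y.2))
  have hrow : ∀ ω, (fun j' => if c.2 < j' then
      (univ.filter fun c' : κ₁ × κ₂ => c.2 < c'.2).piecewise (X' ω) (fun _ => default) (c.1, j')
      else false) = rowSuffix (X ω) c.1 c.2 := fun ω => by
    funext j'
    by_cases hj : c.2 < j' <;> simp [rowSuffix, hj, X']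
  simp only [hrow] at hsuffix
  exact hsuffix.trans
    (condEntropy_le_binEntropy p hp0 hp1 _ _ fun y : (κ₂ → Bool) × γ => G c.1 c.2 y.1 y.2)

open scoped Classical in
lemma prP_comp_eq_sum {β : Type} [Fintype β] (A : Ω → β) (P : β → Prop) :
    prP p {ω | P (A ω)} = ∑ b, if P b then prP p {ω | A ω = b} else 0 := by
  have h := sum_prP_mul p A fun b => if P b then 1 else 0
  simp only [mul_ite, mul_one, mul_zero] at h
  rw [h, prP_setOf]

lemma prP_at_uniform_index {κ ν : Type} [Fintype κ] [Fintype ν] (K : Ω → κ) (V : Ω → ν)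
    (a : ℝ) (hK : ∀ c v, prP p {ω | K ω = c ∧ V ω = v} = a * prP p {ω | V ω = v})
    (Q : κ → ν → Prop) : prP p {ω | Q (K ω) (V ω)} = a * ∑ c, prP p {ω | Q c (V ω)} := by
  rw [prP_comp_eq_sum p (fun ω => (K ω, V ω)) fun x => Q x.1 x.2, Fintype.sum_prod_type, mul_sum]
  refine sum_congr rfl fun c _ => ?_
  rw [prP_comp_eq_sum p V (Q c), mul_sum]
  refine sum_congr rfl fun v _ => ?_
  split_ifs <;> simp [hK]

lemma sum_prP_not_le_of_uniform_index (hp1 : ∑ ω, p ω = 1) {κ ν : Type} [Fintype κ]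
    [Fintype ν] (K : Ω → κ) (V : Ω → ν)
    (hK : ∀ c v, prP p {ω | K ω = c ∧ V ω = v} = (Fintype.card κ : ℝ)⁻¹ * prP p {ω | V ω = v})
    (Q : κ → ν → Prop) {q : ℝ} (hq : 0 < q) (hsucc : q ≤ prP p {ω | Q (K ω) (V ω)}) :
    ∑ c, prP p {ω | ¬ Q c (V ω)} ≤ Fintype.card κ * (1 - q) := by
  have h := prP_at_uniform_index p K V _ hK Q
  have hN : (Fintype.card κ : ℝ) ≠ 0 := fun h0 => by
    rw [h0, inv_zero, zero_mul] at h
    linarith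
  have hsum : ∑ c, prP p {ω | Q c (V ω)} = Fintype.card κ * prP p {ω | Q (K ω) (V ω)} := by
    rw [h, mul_inv_cancel_left₀ hN]
  have hcompl : ∑ c, prP p {ω | ¬ Q c (V ω)} = Fintype.card κ - ∑ c, prP p {ω | Q c (V ω)} := by
    have hc : ∀ c, prP p {ω | ¬ Q c (V ω)} = 1 - prP p {ω | Q c (V ω)} := fun c =>
      prP_compl p hp1 _
    simp only [hc, sum_sub_distrib, sum_const, card_univ, nsmul_eq_mul, mul_one]
  rw [hcompl, hsum]
  nlinarith [(Nat.cast_nonneg (Fintype.card κ) : (0 : ℝ) ≤ _)]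

lemma sum_binEntropy_le_card_mul {κ : Type} [Fintype κ] (q : κ → ℝ)
    (hq : ∀ c, q c ∈ Set.Icc 0 1) {δ : ℝ} (hδ : δ ≤ 2⁻¹) (hsum : ∑ c, q c ≤ Fintype.card κ * δ) :
    ∑ c, binEntropy (q c) ≤ Fintype.card κ * binEntropy δ := by
  rcases isEmpty_or_nonempty κ with hκ | hκ
  · simp
  set N : ℝ := (Fintype.card κ : ℝ)
  have hN : 0 < N := by positivity
  have hJensen := strictConcave_binEntropy.concaveOn.le_map_sum (t := univ) (w := fun _ => N⁻¹)
    (p := q) (fun _ _ => by positivity) (by simp [N]) fun c _ => hq c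
  simp only [smul_eq_mul, ← mul_sum] at hJensen
  have hmean0 : 0 ≤ N⁻¹ * ∑ c, q c := by
    have := sum_nonneg fun c (_ : c ∈ univ) => (hq c).1
    positivity
  have hmean : N⁻¹ * ∑ c, q c ≤ δ := by rwa [inv_mul_le_iff₀ hN]
  have hmono := binEntropy_strictMonoOn.monotoneOn ⟨hmean0, hmean.trans hδ⟩
    ⟨hmean0.trans hmean, hδ⟩ hmean
  calc ∑ c, binEntropy (q c) = N * (N⁻¹ * ∑ c, binEntropy (q c)) := by field_simp
    _ ≤ N * binEntropy δ := mul_le_mul_of_nonneg_left (hJensen.trans hmono) hN.le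

lemma entropy_sub_condEntropy_le_entropy (hp0 : ∀ ω, 0 ≤ p ω) (hp1 : ∑ ω, p ω = 1)
    {β ρ μ : Type} [Fintype β] [Fintype ρ] [Fintype μ] (X : Ω → β) (R : Ω → ρ) (f : β → ρ → μ)
    (hXR : ∀ x r, prP p {ω | X ω = x ∧ R ω = r} = prP p {ω | X ω = x} * prP p {ω | R ω = r}) :
    entropy p X - condEntropy p X (fun ω => (R ω, f (X ω) (R ω))) ≤
      entropy p (fun ω => f (X ω) (R ω)) := by
  have hXW : entropy p (fun ω => (X ω, (R ω, f (X ω) (R ω)))) = entropy p X + entropy p R := by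
    rw [← entropy_pair_of_indep p hp1 X R hXR]
    exact entropy_congr p (φ := fun y => (y.1, y.2.1)) (ψ := fun y => (y.1, (y.2, f y.1 y.2)))
      (fun _ => rfl) fun _ => rfl
  have hW := entropy_pair_le_add p hp0 hp1 R fun ω => f (X ω) (R ω)
  rw [condEntropy, hXW]
  linarith

lemma entropy_eq_log_card_of_uniform {β : Type} [Fintype β] (A : Ω → β)
    (h : ∀ b, prP p {ω | A ω = b} = (Fintype.card β : ℝ)⁻¹) :
    entropy p A = log (Fintype.card β) := by
  rcases isEmpty_or_nonempty β with hβ | hβ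
  · simp [entropy]
  simp only [entropy, h, sum_const, card_univ, nsmul_eq_mul, negMulLog, log_inv]
  field_simp

lemma ent2_eq_entropy_div_log_two {β : Type} [Fintype β] (A : Ω → β) :
    ent2 p A = entropy p A / log 2 := by
  simp only [ent2, entropy, negMulLog, logb, sum_div]
  exact sum_congr rfl fun _ _ => by ring

lemma binEnt2_eq_binEntropy_div_log_two (q : ℝ) : binEnt2 q = binEntropy q / log 2 := by
  rw [binEnt2, binEntropy_eq_negMulLog_add_negMulLog_one_sub, negMulLog, negMulLog, logb, logb]
  ring

end EmbeddedAugmentedIndex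

open EmbeddedAugmentedIndex

theorem stmt7_general {Ω ρ μ : Type} [Fintype Ω] [Fintype ρ] [Fintype μ]
    (s t : ℕ)
    (ε : ℝ) (hε0 : 0 < ε)
    (p : Ω → ℝ) (hp0 : ∀ ω, 0 ≤ p ω) (hp1 : ∑ ω : Ω, p ω = 1)
    (X : Ω → Fin s → Fin t → Bool) (R : Ω → ρ) (I : Ω → Fin s) (J : Ω → Fin t)
    (hXunif : ∀ x : Fin s → Fin t → Bool, prP p {ω | X ω = x} = 1 / 2 ^ (s * t))
    (hXR : ∀ (x : Fin s → Fin t → Bool) (r : ρ),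
      prP p {ω | X ω = x ∧ R ω = r} = prP p {ω | X ω = x} * prP p {ω | R ω = r})
    (hIJ : ∀ (i : Fin s) (j : Fin t) (x : Fin s → Fin t → Bool) (r : ρ),
      prP p {ω | I ω = i ∧ J ω = j ∧ X ω = x ∧ R ω = r} =
        (1 / ((s : ℝ) * t)) * prP p {ω | X ω = x ∧ R ω = r})
    (f : (Fin s → Fin t → Bool) → ρ → μ)
    (g : Fin s → Fin t → (Fin t → Bool) → ρ → μ → Bool)
    (hsucc : 1 / 2 + ε ≤ prP p {ω |
      g (I ω) (J ω) (fun j' => if J ω < j' then X ω (I ω) j' else false) (R ω)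
          (f (X ω) (R ω)) = X ω (I ω) (J ω)}) :
    (1 - binEnt2 (1 / 2 - ε)) * (s * t) ≤ ent2 p (fun ω => f (X ω) (R ω)) := by
  have hcard : (Fintype.card (Fin s × Fin t) : ℝ) = s * t := by simp
  set perr : Fin s × Fin t → ℝ := fun c => prP p {ω |
    g c.1 c.2 (rowSuffix (X ω) c.1 c.2) (R ω) (f (X ω) (R ω)) ≠ X ω c.1 c.2}
  have herr : ∑ c, perr c ≤ s * t * (1 / 2 - ε) := by
    have := sum_prP_not_le_of_uniform_index p hp1 (fun ω => (I ω, J ω)) (fun ω => (X ω, R ω))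
      (fun c v => by simpa [Prod.ext_iff, and_assoc, hcard] using hIJ c.1 c.2 v.1 v.2)
      (fun c v => g c.1 c.2 (rowSuffix v.1 c.1 c.2) v.2 (f v.1 v.2) = v.1 c.1 c.2)
      (by linarith) hsucc
    rw [hcard] at this
    convert this using 2
    ring
  have hdecode := condEntropy_le_sum_binEntropy p hp0 hp1 X (fun ω => (R ω, f (X ω) (R ω)))
    fun i j v w => g i j v w.1 w.2
  have hjensen := sum_binEntropy_le_card_mul perr
    (fun c => ⟨prP_nonneg p hp0 _, prP_le_one p hp0 hp1 _⟩) (by linarith : 1 / 2 - ε ≤ 2⁻¹)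
    (by rwa [hcard])
  have hmsg := entropy_sub_condEntropy_le_entropy p hp0 hp1 X R f hXR
  have hX : entropy p X = s * t * log 2 := by
    rw [entropy_eq_log_card_of_uniform p X fun x => by simp [hXunif, ← pow_mul, mul_comm]]
    simp [← pow_mul, mul_comm]
  rw [ent2_eq_entropy_div_log_two, binEnt2_eq_binEntropy_div_log_two,
    le_div_iff₀ (log_pos one_lt_two)]
  have hlog : (1 - binEntropy (1 / 2 - ε) / log 2) * (s * t) * log 2 =
      s * t * log 2 - s * t * binEntropy (1 / 2 - ε) := by
    field_simp
  rw [hcard] at hjensen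
  linarith

/-- Information-theoretic form of the Embedded-Augmented-Index lower bound
(paper's Theorem 4.1): `X` consists of `s·t` independent uniform bits (equivalently,
`X` is uniform on `Fin s → Fin t → Bool`), `R` is independent of `X`, `(I, J)` is
uniform on `[s] × [t]` and independent of `(X, R)`, the message is `M = f(X, R)`, and
Bob's guess is `X̃ = g(I, J, suffix of X_I after J, R, M)`. If
`Pr[X̃ = X_I[J]] ≥ 1/2 + ε` then `H(M) ≥ (1 - H₂(1/2 - ε))·s·t` bits. -/
theorem stmt7 {Ω ρ μ : Type} [Fintype Ω] [Fintype ρ] [Fintype μ]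
    (s t : ℕ) (hs : 1 ≤ s) (ht : 1 ≤ t)
    (ε : ℝ) (hε0 : 0 < ε) (hε1 : ε < 1 / 2)
    (p : Ω → ℝ) (hp0 : ∀ ω, 0 ≤ p ω) (hp1 : ∑ ω : Ω, p ω = 1)
    (X : Ω → Fin s → Fin t → Bool) (R : Ω → ρ) (I : Ω → Fin s) (J : Ω → Fin t)
    (hXunif : ∀ x : Fin s → Fin t → Bool, prP p {ω | X ω = x} = 1 / 2 ^ (s * t))
    (hXR : ∀ (x : Fin s → Fin t → Bool) (r : ρ),
      prP p {ω | X ω = x ∧ R ω = r} = prP p {ω | X ω = x} * prP p {ω | R ω = r})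
    (hIJ : ∀ (i : Fin s) (j : Fin t) (x : Fin s → Fin t → Bool) (r : ρ),
      prP p {ω | I ω = i ∧ J ω = j ∧ X ω = x ∧ R ω = r} =
        (1 / ((s : ℝ) * t)) * prP p {ω | X ω = x ∧ R ω = r})
    (f : (Fin s → Fin t → Bool) → ρ → μ)
    (g : Fin s → Fin t → (Fin t → Bool) → ρ → μ → Bool)
    (hsucc : 1 / 2 + ε ≤ prP p {ω |
      g (I ω) (J ω) (fun j' => if J ω < j' then X ω (I ω) j' else false) (R ω)
          (f (X ω) (R ω)) = X ω (I ω) (J ω)}) :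
    (1 - binEnt2 (1 / 2 - ε)) * (s * t) ≤ ent2 p (fun ω => f (X ω) (R ω)) :=
  stmt7_general s t ε hε0 p hp0 hp1 X R I J hXunif hXR hIJ f g hsucc
end

section
/- Let G be a bipartite graph with parts A and B such that |A| = K and every vertex a ∈ A has degree at least K in G. Then every maximal matching of G matches every vertex of A. -/
/-!
If `a ∈ A` were unmatched, maximality would force every neighbour of `a` to be matched. The
neighbours lie in `B` and each edge of `M` has only one endpoint in `B`, so `|M| ≥ deg a ≥ K`.
On the other hand each edge of `M` has an endpoint in `A \ {a}`, and these endpoints are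
distinct, so `|M| ≤ K - 1`.
-/

open Finset

namespace IsMatching

variable {V : Type} {M : Finset (Sym2 V)}

theorem eq_of_mem_of_mem (hM : IsMatching M) {e f : Sym2 V} (he : e ∈ M) (hf : f ∈ M)
    {v : V} (hve : v ∈ e) (hvf : v ∈ f) : e = f := by
  by_contra hne
  exact hM.2 e he f hf hne v ⟨hve, hvf⟩

theorem insert_mk [DecidableEq V] (hM : IsMatching M) {u v : V} (huv : u ≠ v)
    (hu : ∀ f ∈ M, u ∉ f) (hv : ∀ f ∈ M, v ∉ f) : IsMatching (insert s(u, v) M) := by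
  have hfree : ∀ f ∈ M, ∀ w ∈ s(u, v), w ∉ f := by
    intro f hf w hw
    rcases Sym2.mem_iff.mp hw with rfl | rfl
    exacts [hu f hf, hv f hf]
  refine ⟨?_, ?_⟩
  · intro e he
    rcases mem_insert.mp he with rfl | he
    · simpa using huv
    · exact hM.1 e he
  · intro e he f hf hne w ⟨hwe, hwf⟩
    rcases mem_insert.mp he with rfl | he <;> rcases mem_insert.mp hf with rfl | hf
    · exact hne rfl
    · exact hfree f hf w hwe hwf
    · exact hfree e he w hwf hwe
    · exact hM.2 e he f hf hne w ⟨hwe, hwf⟩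

theorem card_le_card_of_forall_exists_mem (hM : IsMatching M) {S : Finset V}
    (hS : ∀ f ∈ M, ∃ v ∈ S, v ∈ f) : #M ≤ #S :=
  card_le_card_of_forall_subsingleton (fun f v => v ∈ f) hS
    fun _ _ _ hf _ hf' => hM.eq_of_mem_of_mem hf.1 hf'.1 hf.2 hf'.2

end IsMatching

theorem IsMaximalMatching.exists_mem_of_mk_mem {V : Type} [DecidableEq V]
    {E M : Finset (Sym2 V)} (hM : IsMaximalMatching E M) {u v : V} (huv : u ≠ v)
    (hE : s(u, v) ∈ E) (hu : ∀ f ∈ M, u ∉ f) : ∃ f ∈ M, v ∈ f := by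
  by_contra! hv
  exact hu _ (hM.2.2 _ hE (hM.1.insert_mk huv hu hv)) (Sym2.mem_mk_left u v)

section Bipartite

variable {V : Type} {E : Finset (Sym2 V)} {A B : Finset V}

theorem exists_mem_left_of_mem (hbip : ∀ e ∈ E, ∃ a ∈ A, ∃ b ∈ B, e = s(a, b))
    {e : Sym2 V} (he : e ∈ E) : ∃ a ∈ A, a ∈ e := by
  obtain ⟨a, ha, b, -, rfl⟩ := hbip e he
  exact ⟨a, ha, Sym2.mem_mk_left a b⟩

theorem eq_of_mem_right_of_mem_right (hdisj : Disjoint A B)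
    (hbip : ∀ e ∈ E, ∃ a ∈ A, ∃ b ∈ B, e = s(a, b)) {e : Sym2 V} (he : e ∈ E)
    {b b' : V} (hb : b ∈ B) (hb' : b' ∈ B) (hbe : b ∈ e) (hb'e : b' ∈ e) : b = b' := by
  obtain ⟨a, ha, c, -, rfl⟩ := hbip e he
  have hab : ∀ x ∈ B, x ∈ s(a, c) → x = c := fun x hx hxe =>
    (Sym2.mem_iff.mp hxe).resolve_left fun h => disjoint_left.mp hdisj ha (h ▸ hx)
  rw [hab b hb hbe, hab b' hb' hb'e]

theorem card_filter_mem_le_card_neighbors [DecidableEq V] (hdisj : Disjoint A B)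
    (hbip : ∀ e ∈ E, ∃ a ∈ A, ∃ b ∈ B, e = s(a, b)) {a : V} (ha : a ∈ A) :
    #(E.filter (fun e => a ∈ e)) ≤ #(B.filter (fun b => s(a, b) ∈ E)) := by
  refine (card_le_card fun e he => ?_).trans (card_image_le (f := fun b => s(a, b)))
  obtain ⟨heE, hae⟩ := mem_filter.mp he
  obtain ⟨a', -, b, hb, rfl⟩ := hbip e heE
  have ha' : a = a' :=
    (Sym2.mem_iff.mp hae).resolve_right fun h => disjoint_left.mp hdisj ha (h ▸ hb)
  subst ha'
  exact mem_image.mpr ⟨b, mem_filter.mpr ⟨hb, heE⟩, rfl⟩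

theorem card_le_card_of_forall_exists_mem_right (hdisj : Disjoint A B)
    (hbip : ∀ e ∈ E, ∃ a ∈ A, ∃ b ∈ B, e = s(a, b)) {M : Finset (Sym2 V)} (hME : M ⊆ E)
    {T : Finset V} (hTB : T ⊆ B) (hT : ∀ b ∈ T, ∃ f ∈ M, b ∈ f) : #T ≤ #M :=
  card_le_card_of_forall_subsingleton (fun b f => b ∈ f) hT fun _ hf _ hb _ hb' =>
    eq_of_mem_right_of_mem_right hdisj hbip (hME hf) (hTB hb.1) (hTB hb'.1) hb.2 hb'.2

end Bipartite

theorem stmt8_general {V : Type} [DecidableEq V]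
    (E : Finset (Sym2 V)) (A B : Finset V) (K : ℕ)
    (hdisj : Disjoint A B)
    (hbip : ∀ e ∈ E, ∃ a ∈ A, ∃ b ∈ B, e = s(a, b))
    (hA : A.card = K)
    (hdeg : ∀ a ∈ A, K ≤ (E.filter (fun e => a ∈ e)).card)
    (M : Finset (Sym2 V)) (hM : IsMaximalMatching E M) :
    ∀ a ∈ A, ∃ e ∈ M, a ∈ e := by
  intro a ha
  by_contra! ha_free
  have hneighbors_le : #(B.filter (fun b => s(a, b) ∈ E)) ≤ #M := by
    refine card_le_card_of_forall_exists_mem_right hdisj hbip hM.2.1 (filter_subset _ _) ?_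
    intro b hb
    obtain ⟨hb, hbE⟩ := mem_filter.mp hb
    have hab : a ≠ b := fun h => disjoint_left.mp hdisj ha (h ▸ hb)
    exact hM.exists_mem_of_mk_mem hab hbE ha_free
  have hM_le : #M ≤ #(A.erase a) := by
    refine hM.1.card_le_card_of_forall_exists_mem fun f hf => ?_
    obtain ⟨v, hv, hvf⟩ := exists_mem_left_of_mem hbip (hM.2.1 hf)
    exact ⟨v, mem_erase.mpr ⟨fun h => ha_free f hf (h ▸ hvf), hv⟩, hvf⟩
  have hK_pos : 0 < K := hA ▸ card_pos.mpr ⟨a, ha⟩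
  have hdeg_le := (hdeg a ha).trans (card_filter_mem_le_card_neighbors hdisj hbip ha)
  rw [card_erase_of_mem ha, hA] at hM_le
  omega

/-- Core of the paper's deterministic lower bound (Section 5.2): in a bipartite
graph with parts `A` and `B` where `|A| = K` and every vertex of `A` has degree at
least `K`, every maximal matching matches every vertex of `A`. -/
theorem stmt8 {V : Type} [Fintype V] [DecidableEq V]
    (E : Finset (Sym2 V)) (A B : Finset V) (K : ℕ)
    (hdisj : Disjoint A B)
    (hbip : ∀ e ∈ E, ∃ a ∈ A, ∃ b ∈ B, e = s(a, b))
    (hA : A.card = K)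
    (hdeg : ∀ a ∈ A, K ≤ (E.filter (fun e => a ∈ e)).card)
    (M : Finset (Sym2 V)) (hM : IsMaximalMatching E M) :
    ∀ a ∈ A, ∃ e ∈ M, a ∈ e :=
  stmt8_general E A B K hdisj hbip hA hdeg M hM
end

section
/- Let K ≥ 1 and let G' be a bipartite graph with parts A and B such that every vertex a ∈ A has degree exactly 2K in G' and every connected component of G' contains at most K vertices of A. Let D ⊆ E(G') with |D| ≤ K, and let G be the graph obtained from G' by removing the edges in D. Then every maximal matching of G matches every vertex of A. -/
/-!
If some `a ∈ A` were unmatched, each of its at least `2K - |D| ≥ K` neighbours surviving the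
deletion would, by maximality, be matched to a vertex `c ≠ a`; such a `c` lies in `A` and in the
component of `a`, and distinct neighbours get distinct partners. With `a` itself this puts
`K + 1` vertices of `A` into one component.
-/

/-- A matching (as a set of edges): non-loop edges that pairwise share no endpoint. -/
def IsMatchingS {V : Type} (M : Set (Sym2 V)) : Prop :=
  (∀ e ∈ M, ¬ e.IsDiag) ∧ ∀ e ∈ M, ∀ f ∈ M, e ≠ f → ∀ v : V, ¬ (v ∈ e ∧ v ∈ f)

/-- A maximal matching of the graph with edge set `E`. -/
def IsMaximalMatchingS {V : Type} (E M : Set (Sym2 V)) : Prop :=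
  IsMatchingS M ∧ M ⊆ E ∧ ∀ e ∈ E, IsMatchingS (insert e M) → e ∈ M

section Matching

variable {V : Type} {M : Set (Sym2 V)}

theorem IsMatchingS.insert {e : Sym2 V} (hM : IsMatchingS M) (he : ¬ e.IsDiag)
    (hfree : ∀ v ∈ e, ∀ f ∈ M, v ∉ f) : IsMatchingS (insert e M) := by
  refine ⟨fun f hf => ?_, fun f hf g hg hfg v hv => ?_⟩
  · rcases Set.mem_insert_iff.mp hf with rfl | hf
    exacts [he, hM.1 f hf]
  · rcases Set.mem_insert_iff.mp hf with rfl | hfM <;>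
      rcases Set.mem_insert_iff.mp hg with rfl | hgM
    · exact hfg rfl
    · exact hfree v hv.1 g hgM hv.2
    · exact hfree v hv.2 f hfM hv.1
    · exact hM.2 f hfM g hgM hfg v hv

theorem IsMatchingS.eq_of_mk_mem_of_mk_mem {b b' c : V} (hM : IsMatchingS M)
    (h : s(b, c) ∈ M) (h' : s(b', c) ∈ M) : b = b' := by
  by_contra hne
  exact hM.2 _ h _ h' (fun heq => hne (Sym2.congr_left.mp heq)) c
    ⟨Sym2.mem_mk_right _ _, Sym2.mem_mk_right _ _⟩

variable {G : SimpleGraph V} {a : V}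

theorem IsMaximalMatchingS.exists_partner_of_adj (hM : IsMaximalMatchingS G.edgeSet M)
    (ha : ∀ e ∈ M, a ∉ e) {b : V} (hab : G.Adj a b) : ∃ c, c ≠ a ∧ s(b, c) ∈ M := by
  obtain ⟨hMm, -, hmax⟩ := hM
  by_contra! hfree
  refine ha _ (hmax _ hab (hMm.insert (by simpa using hab.ne) ?_)) (Sym2.mem_mk_left _ _)
  rintro v hv f hf hvf
  rcases Sym2.mem_iff.mp hv with rfl | rfl
  · exact ha f hf hvf
  · obtain ⟨c, rfl⟩ := Sym2.mem_iff_exists.mp hvf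
    obtain rfl : c = a := not_not.mp fun hca => hfree c hca hf
    exact ha _ hf (Sym2.mem_mk_right _ _)

theorem IsMaximalMatchingS.ncard_neighborSet_lt (hM : IsMaximalMatchingS G.edgeSet M)
    (ha : ∀ e ∈ M, a ∉ e) {S : Set V} (hS : S.Finite) (haS : a ∈ S)
    (hpartner : ∀ b c, G.Adj a b → s(b, c) ∈ M → c ∈ S) :
    (G.neighborSet a).ncard < S.ncard := by
  choose! p hpa hpM using fun b (hab : G.Adj a b) => hM.exists_partner_of_adj ha hab
  calc (G.neighborSet a).ncard ≤ (S \ {a}).ncard :=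
        Set.ncard_le_ncard_of_injOn p
          (fun b hab => ⟨hpartner b (p b) hab (hpM b hab), hpa b hab⟩)
          (fun b hb b' hb' hbb' => hM.1.eq_of_mk_mem_of_mk_mem (hpM b hb) (hbb' ▸ hpM b' hb'))
          hS.sdiff
    _ < S.ncard := Set.ncard_sdiff_singleton_lt_of_mem haS hS

end Matching

theorem SimpleGraph.ncard_neighborSet_le_ncard_neighborSet_deleteEdges_add {V : Type} [Finite V]
    (G : SimpleGraph V) (D : Finset (Sym2 V)) (a : V) :
    (G.neighborSet a).ncard ≤ ((G.deleteEdges D).neighborSet a).ncard + D.card := by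
  have hsplit : G.neighborSet a ⊆
      (G.deleteEdges D).neighborSet a ∪ (fun b => s(a, b)) ⁻¹' D := by
    intro b hab
    by_cases hD : s(a, b) ∈ D
    · exact Or.inr hD
    · exact Or.inl (SimpleGraph.deleteEdges_adj.mpr ⟨hab, hD⟩)
  have hdeleted : ((fun b => s(a, b)) ⁻¹' (D : Set (Sym2 V))).ncard ≤ D.card :=
    Set.ncard_coe_finset D ▸ Set.ncard_le_ncard_of_injOn _ (fun _ hb => hb)
      (fun _ _ _ _ h => Sym2.congr_right.mp h) D.finite_toSet
  calc (G.neighborSet a).ncard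
      ≤ ((G.deleteEdges D).neighborSet a ∪ (fun b => s(a, b)) ⁻¹' D).ncard :=
        Set.ncard_le_ncard hsplit
    _ ≤ _ := (Set.ncard_union_le _ _).trans (Nat.add_le_add_left hdeleted _)

theorem stmt9_general {V : Type} [Fintype V]
    (K : ℕ)
    (G' : SimpleGraph V) [DecidableRel G'.Adj]
    (A B : Set V) (hdisj : Disjoint A B)
    (hbip : ∀ v w : V, G'.Adj v w → (v ∈ A ∧ w ∈ B) ∨ (v ∈ B ∧ w ∈ A))
    (hdeg : ∀ a ∈ A, G'.degree a = 2 * K)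
    (hcomp : ∀ c : G'.ConnectedComponent,
      {a | a ∈ A ∧ G'.connectedComponentMk a = c}.ncard ≤ K)
    (D : Finset (Sym2 V)) (hDcard : D.card ≤ K)
    (M : Set (Sym2 V))
    (hM : IsMaximalMatchingS (G'.deleteEdges (D : Set (Sym2 V))).edgeSet M) :
    ∀ a ∈ A, ∃ e ∈ M, a ∈ e := by
  intro a ha
  by_contra! hunmatched
  have hbipartite : G'.IsBipartiteWith A B := ⟨hdisj, fun v w => hbip v w⟩
  set S := {x | x ∈ A ∧ G'.connectedComponentMk x = G'.connectedComponentMk a}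
  have hpartner : ∀ b c, (G'.deleteEdges D).Adj a b → s(b, c) ∈ M → c ∈ S := by
    intro b c hab hbc
    have hab' : G'.Adj a b := hab.1
    have hbc' : G'.Adj b c := (hM.2.1 hbc).1
    refine ⟨hbipartite.mem_of_mem_adj' (hbipartite.mem_of_mem_adj ha hab') hbc'.symm, ?_⟩
    exact SimpleGraph.ConnectedComponent.sound (hbc'.symm.reachable.trans hab'.symm.reachable)
  have hfew := hM.ncard_neighborSet_lt hunmatched S.toFinite ⟨ha, rfl⟩ hpartner
  have hmany := G'.ncard_neighborSet_le_ncard_neighborSet_deleteEdges_add D a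
  rw [Set.ncard_eq_toFinset_card', Set.toFinset_card, SimpleGraph.card_neighborSet_eq_degree,
    hdeg a ha] at hmany
  have hS : S.ncard ≤ K := hcomp _
  omega

/-- Deletion-robustness claim of the paper's Section 5.2: if `G'` is a bipartite
graph with parts `A` and `B` in which every `A`-vertex has degree exactly `2K` and
every connected component contains at most `K` vertices of `A`, and `G` is obtained
from `G'` by deleting at most `K` edges, then every maximal matching of `G` matches
every vertex of `A`. -/
theorem stmt9 {V : Type} [Fintype V] [DecidableEq V]
    (K : ℕ) (hK : 1 ≤ K)
    (G' : SimpleGraph V) [DecidableRel G'.Adj]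
    (A B : Set V) (hdisj : Disjoint A B)
    (hbip : ∀ v w : V, G'.Adj v w → (v ∈ A ∧ w ∈ B) ∨ (v ∈ B ∧ w ∈ A))
    (hdeg : ∀ a ∈ A, G'.degree a = 2 * K)
    (hcomp : ∀ c : G'.ConnectedComponent,
      {a | a ∈ A ∧ G'.connectedComponentMk a = c}.ncard ≤ K)
    (D : Finset (Sym2 V)) (hDE : (D : Set (Sym2 V)) ⊆ G'.edgeSet) (hDcard : D.card ≤ K)
    (M : Set (Sym2 V))
    (hM : IsMaximalMatchingS (G'.deleteEdges (D : Set (Sym2 V))).edgeSet M) :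
    ∀ a ∈ A, ∃ e ∈ M, a ∈ e :=
  stmt9_general K G' A B hdisj hbip hdeg hcomp D hDcard M hM
end

section
/- For every natural number K ≥ 1, C(3K, 2K) ≥ C(2K − 1, K − 1) · (3/2)^{K+1}. -/
/-!
Writing `C(n, k) = ∏_{i<k} (n - i) / (k - i)`, the ratio `C(3K, K) / C(2K, K)` is a product of
`K` factors `(3K - i) / (2K - i)`, each at least `3 / 2`; hence `C(3K, K) ≥ (3/2)^K C(2K, K)`.
Since `C(2K, K) = 2 C(2K - 1, K - 1)`, this gives the claim with a factor `4 / 3` to spare.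
-/

namespace Nat

theorem pow_mul_choose_le_pow_mul_choose {m n : ℕ} (hmn : m ≤ n) (k : ℕ) :
    n ^ k * m.choose k ≤ m ^ k * n.choose k := by
  induction k with
  | zero => simp
  | succ k ih =>
    have hfactor : n * (m - k) ≤ m * (n - k) := by
      rw [Nat.mul_sub, Nat.mul_sub, mul_comm n m]
      exact Nat.sub_le_sub_left (Nat.mul_le_mul_right k hmn) _
    refine Nat.le_of_mul_le_mul_right ?_ k.succ_pos
    calc n ^ (k + 1) * m.choose (k + 1) * (k + 1)
        = n ^ k * m.choose k * (n * (m - k)) := by rw [mul_assoc, choose_succ_right_eq]; ring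
      _ ≤ m ^ k * n.choose k * (m * (n - k)) := Nat.mul_le_mul ih hfactor
      _ = m ^ (k + 1) * n.choose (k + 1) * (k + 1) := by
        rw [mul_assoc (m ^ (k + 1)), choose_succ_right_eq]; ring

theorem two_mul_choose_pred_eq_centralBinom {K : ℕ} (hK : 0 < K) :
    2 * (2 * K - 1).choose (K - 1) = (2 * K).choose K := by
  obtain ⟨m, rfl⟩ := Nat.exists_eq_add_of_lt hK
  rw [show 2 * (0 + m + 1) - 1 = 2 * m + 1 by omega, show 0 + m + 1 - 1 = m by omega,
    show 2 * (0 + m + 1) = 2 * m + 1 + 1 by omega, zero_add, choose_succ_succ, choose_symm_half]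
  ring

theorem three_pow_mul_centralBinom_le {K : ℕ} (hK : 0 < K) :
    3 ^ K * (2 * K).choose K ≤ 2 ^ K * (3 * K).choose K := by
  have h := pow_mul_choose_le_pow_mul_choose (by omega : 2 * K ≤ 3 * K) K
  refine Nat.le_of_mul_le_mul_left ?_ (pow_pos hK K)
  convert h using 1 <;> ring

end Nat

/-- For every natural `K ≥ 1`, `C(3K, 2K) ≥ C(2K-1, K-1) * (3/2)^(K+1)`. -/
theorem stmt11 (K : ℕ) (hK : 1 ≤ K) :
    ((2 * K - 1).choose (K - 1) : ℝ) * (3 / 2 : ℝ) ^ (K + 1) ≤ ((3 * K).choose (2 * K) : ℝ) := by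
  have hsymm : (3 * K).choose (2 * K) = (3 * K).choose K := Nat.choose_symm_of_eq_add (by ring)
  have hbound := Nat.three_pow_mul_centralBinom_le hK
  rw [← Nat.two_mul_choose_pred_eq_centralBinom hK] at hbound
  have hnat : (2 * K - 1).choose (K - 1) * 3 ^ (K + 1) ≤ 2 ^ (K + 1) * (3 * K).choose K := by
    rw [pow_succ, pow_succ]
    nlinarith [Nat.zero_le (2 ^ K * (3 * K).choose K)]
  rw [hsymm, div_pow, ← mul_div_assoc, div_le_iff₀ (by positivity)]
  exact_mod_cast hnat.trans_eq (mul_comm _ _)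
end
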